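/- arXiv:1302.6785 — 2 statements merged into one kernel-verified Lean document; each statement's English description precedes it below -/
import Mathlib

section
/- Let α₁, …, α_m be complex numbers that are linearly independent over ℚ, and for g = (g₁, …, g_m) ∈ ℤᵐ write ⟨α, g⟩ = Σ αᵢgᵢ. Then the assignment g ↦ exp(t⟨α, g⟩) extends to a ring homomorphism Γ : ℤ[ℤᵐ] → ℂ[[t]] from the group algebra of ℤᵐ (each exp(t⟨α, g⟩) being a unit of ℂ[[t]]), and Γ is injective. -/
/-- The formal power series `exp(βt) = Σ_{n≥0} βⁿtⁿ/n! ∈ ℂ[[t]]`. -/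
noncomputable def expPS (β : ℂ) : PowerSeries ℂ :=
  PowerSeries.mk fun n => β ^ n / (n.factorial : ℂ)

/-!
With `β g = ⟨α, g⟩`, which is injective on `ℤᵐ` because `α` is linearly independent over `ℚ`,
`Γ` sends `∑ c_g g` to `∑ c_g exp(β(g) t)`, whose `n`-th coefficient times `n!` is
`∑ c_g β(g)ⁿ`. So `Γ x = 0` would be a linear relation between the characters `n ↦ β(g)ⁿ` of
`(ℕ, +)`, which are distinct, hence linearly independent by Dedekind's lemma.
-/

open PowerSeries Function

theorem linearIndependent_pow_of_injective {ι L : Type*} [CommRing L] [IsDomain L]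
    {z : ι → L} (hz : Injective z) : LinearIndependent L fun i (n : ℕ) => z i ^ n :=
  (linearIndependent_monoidHom (Multiplicative ℕ) L).comp (powersHom L ∘ z)
    ((powersHom L).injective.comp hz)

theorem expPS_eq_rescale_exp (β : ℂ) : expPS β = rescale β (exp ℂ) := by
  ext n
  simp [expPS, coeff_rescale, coeff_exp, div_eq_mul_inv]

theorem expPS_add (a b : ℂ) : expPS (a + b) = expPS a * expPS b := by
  simp only [expPS_eq_rescale_exp, exp_mul_exp_eq_exp_add]

theorem expPS_zero : expPS 0 = 1 := by
  simp [expPS_eq_rescale_exp, rescale_zero]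

theorem isUnit_expPS (β : ℂ) : IsUnit (expPS β) := by
  simp [isUnit_iff_constantCoeff, expPS, ← coeff_zero_eq_constantCoeff_apply]

theorem linearIndependent_expPS {ι : Type*} {z : ι → ℂ} (hz : Injective z) :
    LinearIndependent ℂ fun i => expPS (z i) := by
  let scaledCoeff : PowerSeries ℂ →ₗ[ℂ] ℕ → ℂ :=
    LinearMap.pi fun n => (n.factorial : ℂ) • coeff n
  have hcomp : scaledCoeff ∘ (fun i => expPS (z i)) = fun i n => z i ^ n := by
    ext i n
    simp only [scaledCoeff, expPS, comp_apply, LinearMap.pi_apply, LinearMap.smul_apply, coeff_mk,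
      smul_eq_mul]
    exact mul_div_cancel₀ _ (Nat.cast_ne_zero.2 n.factorial_ne_zero)
  exact .of_comp scaledCoeff (hcomp ▸ linearIndependent_pow_of_injective hz)

noncomputable def expPSMonoidHom : Multiplicative ℂ →* PowerSeries ℂ where
  toFun β := expPS β.toAdd
  map_one' := expPS_zero
  map_mul' a b := expPS_add a.toAdd b.toAdd

section expPSAlgHom

variable {G : Type*} [AddMonoid G] (β : G →+ ℂ)

noncomputable def expPSAlgHom : AddMonoidAlgebra ℤ G →ₐ[ℤ] PowerSeries ℂ :=
  AddMonoidAlgebra.lift ℤ (PowerSeries ℂ) G (expPSMonoidHom.comp β.toMultiplicative)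

theorem expPSAlgHom_single (g : G) :
    expPSAlgHom β (AddMonoidAlgebra.single g 1) = expPS (β g) := by
  rw [expPSAlgHom, AddMonoidAlgebra.lift_single]
  exact one_smul ℤ _

theorem expPSAlgHom_apply (x : AddMonoidAlgebra ℤ G) :
    expPSAlgHom β x = Finsupp.linearCombination ℤ (fun g => expPS (β g)) x.coeff := by
  rw [expPSAlgHom, AddMonoidAlgebra.lift_apply, Finsupp.linearCombination_apply]
  rfl

theorem expPSAlgHom_injective (hβ : Injective β) : Injective (expPSAlgHom β) := by
  intro x y hxy
  rw [expPSAlgHom_apply, expPSAlgHom_apply] at hxy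
  exact AddMonoidAlgebra.coeff_injective
    ((linearIndependent_expPS hβ).restrict_scalars' ℤ hxy)

end expPSAlgHom

/-- if `α₁, …, α_m ∈ ℂ` are linearly independent over `ℚ`, then each
`exp(t⟨α, g⟩)` is a unit of `ℂ[[t]]`, the assignment `g ↦ exp(t⟨α, g⟩)` extends to a
ring homomorphism `Γ : ℤ[ℤᵐ] → ℂ[[t]]`, and `Γ` is injective. -/
theorem exists_injective_expHom {m : ℕ} (α : Fin m → ℂ)
    (hα : LinearIndependent ℚ α) :
    (∀ g : Fin m → ℤ, IsUnit (expPS (∑ i, α i * (g i : ℂ)))) ∧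
    ∃ Γ : AddMonoidAlgebra ℤ (Fin m → ℤ) →+* PowerSeries ℂ,
      (∀ g : Fin m → ℤ,
        Γ (AddMonoidAlgebra.single g (1 : ℤ)) = expPS (∑ i, α i * (g i : ℂ))) ∧
      Function.Injective Γ := by
  let β := (Fintype.linearCombination ℤ α).toAddMonoidHom
  have hβ (g : Fin m → ℤ) : β g = ∑ i, α i * (g i : ℂ) := by
    simp [β, Fintype.linearCombination_apply, mul_comm]
  refine ⟨fun g => isUnit_expPS _, (expPSAlgHom β).toRingHom, fun g => ?_, ?_⟩
  · simp [expPSAlgHom_single, hβ]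
  · exact expPSAlgHom_injective β ((hα.restrict_scalars' ℤ).fintypeLinearCombination_injective)
end

section
/- Let G be a group, R an integral domain, ρ : G → GL(l, R) a representation, φ : G → ℤⁿ a surjective homomorphism, C_* a bounded chain complex of finitely generated free right ℤ[G]-modules, and let k ≥ 0, q > 0. Then there is a finite family of proper full subgroups G_1, …, G_s of Hom(ℤⁿ, ℤ) such that for every m ≥ 0 and every group homomorphism p : ℤⁿ → ℤᵐ, the condition b_k(C_*, ρ; p) ≥ b_k°(C_*, ρ) + q holds if and only if p is subordinate to G_i for some i. -/
/-- A finite free chain complex `0 ← C_0 ← C_1 ← ⋯ ← C_N ← 0` over a ring `T`,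
recorded by the ranks `c k` of its finitely generated free chain modules and the
matrices of its boundary operators; `d k` is the matrix of `∂_{k+1} : C_{k+1} → C_k`. -/
structure FinFreeChainComplex (T : Type) [Ring T] where
  N : ℕ
  c : ℕ → ℕ
  bounded : ∀ k : ℕ, N < k → c k = 0
  d : ∀ k : ℕ, Matrix (Fin (c k)) (Fin (c (k + 1))) T
  dsq : ∀ k : ℕ, d k * d (k + 1) = 0

/-- The rank, over the fraction field `{U}` of `U`, of the matrix of `∂_{k+1}`
with entries mapped by the ring homomorphism `φ : T →+* U`. -/
noncomputable def FinFreeChainComplex.bdryRank {T U : Type} [Ring T] [CommRing U]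
    (C : FinFreeChainComplex T) (φ : T →+* U) (k : ℕ) : ℕ :=
  ((C.d k).map ⇑((algebraMap U (FractionRing U)).comp φ)).rank

/-- The rank, over `{U}`, of the matrix of `∂_k : C_k → C_{k-1}` (with `∂_0 = 0`)
with entries mapped by `φ`. -/
noncomputable def FinFreeChainComplex.bdryRankAt {T U : Type} [Ring T] [CommRing U]
    (C : FinFreeChainComplex T) (φ : T →+* U) (k : ℕ) : ℕ :=
  match k with
  | 0 => 0
  | k' + 1 => C.bdryRank φ k'

/-- `b_k(C_*, φ) = dim_{{U}} H_k(C_* ⊗_φ {U}) = c_k − rk φ(∂_k) − rk φ(∂_{k+1})`. -/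
noncomputable def FinFreeChainComplex.bettiMap {T U : Type} [Ring T] [CommRing U]
    (C : FinFreeChainComplex T) (φ : T →+* U) (k : ℕ) : ℕ :=
  C.c k - C.bdryRankAt φ k - C.bdryRank φ k

/-- `b_k(C_*) = dim_{{T}} H_k(C_* ⊗_T {T})`. -/
noncomputable def FinFreeChainComplex.betti {T : Type} [CommRing T]
    (C : FinFreeChainComplex T) (k : ℕ) : ℕ :=
  C.bettiMap (RingHom.id T) k

/-- Flattening of a block matrix: a matrix of `l × l` matrices becomes an ordinary matrix. -/
def blockFlatten {a b l : ℕ} {S : Type}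
    (M : Matrix (Fin a) (Fin b) (Matrix (Fin l) (Fin l) S)) :
    Matrix (Fin a × Fin l) (Fin b × Fin l) S :=
  Matrix.of fun ik jl => M ik.1 jl.1 ik.2 jl.2

/-- The ring homomorphism `ℤ[G] → Mat_l(S)` induced by a representation
`τ : G →* GL(l, S)`. -/
noncomputable def reprMatRingHom {G : Type} [Group G] {l : ℕ} {S : Type} [CommRing S]
    (τ : G →* GL (Fin l) S) : MonoidAlgebra ℤ G →+* Matrix (Fin l) (Fin l) S :=
  ((MonoidAlgebra.lift ℤ (Matrix (Fin l) (Fin l) S) G)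
    ((Units.coeHom (Matrix (Fin l) (Fin l) S)).comp τ)).toRingHom

/-- The rank over the fraction field `{S}` of the matrix of `∂_{k+1} ⊗ 1` in the
complex `C_* ⊗_{ℤ[G], τ} {S}^l`. -/
noncomputable def reprBdryRank {G : Type} [Group G] {l : ℕ} {S : Type} [CommRing S]
    (C : FinFreeChainComplex (MonoidAlgebra ℤ G)) (τ : G →* GL (Fin l) S) (k : ℕ) : ℕ :=
  ((blockFlatten ((C.d k).map ⇑(reprMatRingHom τ))).map
    ⇑(algebraMap S (FractionRing S))).rank

/-- The rank over `{S}` of the matrix of `∂_k ⊗ 1` (with `∂_0 = 0`). -/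
noncomputable def reprBdryRankAt {G : Type} [Group G] {l : ℕ} {S : Type} [CommRing S]
    (C : FinFreeChainComplex (MonoidAlgebra ℤ G)) (τ : G →* GL (Fin l) S) (k : ℕ) : ℕ :=
  match k with
  | 0 => 0
  | k' + 1 => reprBdryRank C τ k'

/-- `b_k(C_*, τ) = dim_{{S}} H_k(C_* ⊗_{ℤ[G], τ} {S}^l)` for a representation
`τ : G →* GL(l, S)` into an integral domain `S`. -/
noncomputable def reprBetti {G : Type} [Group G] {l : ℕ} {S : Type} [CommRing S]
    (C : FinFreeChainComplex (MonoidAlgebra ℤ G)) (τ : G →* GL (Fin l) S) (k : ℕ) : ℕ :=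
  C.c k * l - reprBdryRankAt C τ k - reprBdryRank C τ k

/-- The homomorphism `GL(l, S) →* GL(l, S')` induced by a ring homomorphism `S →+* S'`. -/
def glMap {l : ℕ} {S S' : Type} [CommRing S] [CommRing S'] (f : S →+* S') :
    GL (Fin l) S →* GL (Fin l) S' :=
  Units.map f.mapMatrix.toMonoidHom

/-- `p : ℤⁿ → ℤᵐ` is subordinate to a subgroup `G ⊆ Hom(ℤⁿ, ℤ)` if all the coordinate
homomorphisms of `p` belong to `G`. -/
def Subordinate {n m : ℕ} (p : (Fin n → ℤ) →+ (Fin m → ℤ))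
    (G : AddSubgroup ((Fin n → ℤ) →+ ℤ)) : Prop :=
  ∀ j : Fin m, (Pi.evalAddMonoidHom (fun _ : Fin m => ℤ) j).comp p ∈ G

/-!
`b_k` is `c_k l` minus the ranks of `∂_k ⊗ 1` and `∂_{k+1} ⊗ 1` over the fraction field, and
specializing along `p` can only lower these ranks; so `b_k` jumps by at least `q` iff the two
ranks drop by some `j` and `q - j`. A rank drops to at most `t` iff `p_*` kills every
`(t+1)`-minor, and `p_* f = 0` for `f ∈ R[ℤⁿ]` iff `p`, restricted to the support of `f`, factors
through some self-map `π` of that support with `π_* f = 0`, i.e. iff `p` is subordinate to the saturated subgroup of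
functionals constant on the fibres of `π`. Finite unions and intersections of such conditions
are again of this form; saturated subgroups of `Hom(ℤⁿ, ℤ)` are direct summands, and none of
them is all of `Hom(ℤⁿ, ℤ)` because `p = id` produces no jump.
-/

namespace Matrix

variable {ι κ F : Type} [Fintype κ] [Field F]

theorem exists_linearIndependent_cols_submatrix (M : Matrix ι κ F) {t : ℕ} (ht : t ≤ M.rank) :
    ∃ c : Fin t → κ, LinearIndependent F (M.submatrix id c).col := by
  obtain ⟨κ', a, ha, hspan, hli⟩ := exists_linearIndependent' F M.col
  have : Fintype κ' := Fintype.ofInjective a ha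
  have hcard : t ≤ Fintype.card κ' := by
    rwa [← finrank_span_eq_card hli, hspan, ← rank_eq_finrank_span_cols]
  obtain ⟨e⟩ : Nonempty (Fin t ↪ κ') :=
    Function.Embedding.nonempty_of_card_le (by rwa [Fintype.card_fin])
  exact ⟨a ∘ e, hli.comp e e.injective⟩

theorem exists_det_submatrix_ne_zero [Fintype ι] (M : Matrix ι κ F) {t : ℕ} (ht : t ≤ M.rank) :
    ∃ (r : Fin t → ι) (c : Fin t → κ), (M.submatrix r c).det ≠ 0 := by
  obtain ⟨c, hc⟩ := M.exists_linearIndependent_cols_submatrix ht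
  have hrank : t ≤ (M.submatrix id c)ᵀ.rank := by
    rw [(show LinearIndependent F (M.submatrix id c)ᵀ.row from hc).rank_matrix, Fintype.card_fin]
  obtain ⟨r, hr⟩ := (M.submatrix id c)ᵀ.exists_linearIndependent_cols_submatrix hrank
  exact ⟨r, c, ((linearIndependent_rows_iff_isUnit.1 hr).map detMonoidHom).ne_zero⟩

theorem rank_le_iff_forall_det_submatrix_eq_zero [Fintype ι] (M : Matrix ι κ F) (t : ℕ) :
    M.rank ≤ t ↔ ∀ (r : Fin (t + 1) → ι) (c : Fin (t + 1) → κ), (M.submatrix r c).det = 0 := by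
  refine ⟨fun h r c => ?_, fun h => ?_⟩
  · by_contra hdet
    have := (M.rank_submatrix_le r c).trans h
    rw [rank_of_det_ne_zero hdet, Fintype.card_fin] at this
    omega
  · by_contra! hlt
    obtain ⟨r, c, hdet⟩ := M.exists_det_submatrix_ne_zero hlt
    exact hdet (h r c)

theorem rank_map_le_iff {A : Type} [CommRing A] [Fintype ι] (σ : A →+* F) (M : Matrix ι κ A)
    (t : ℕ) :
    (M.map σ).rank ≤ t ↔
      ∀ (r : Fin (t + 1) → ι) (c : Fin (t + 1) → κ), σ (M.submatrix r c).det = 0 := by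
  simp only [rank_le_iff_forall_det_submatrix_eq_zero, RingHom.map_det]
  rfl

theorem rank_map_le_rank_map_of_injective {A F' : Type} [CommRing A] [Field F'] [Fintype ι]
    (σ : A →+* F) {σ' : A →+* F'} (hσ' : Function.Injective σ') (M : Matrix ι κ A) :
    (M.map σ).rank ≤ (M.map σ').rank := by
  refine (rank_map_le_iff σ M _).2 fun r c => ?_
  have := (rank_map_le_iff σ' M _).1 le_rfl r c
  rw [map_eq_zero_iff σ' hσ'] at this
  rw [this, map_zero]

end Matrix

theorem AddSubgroup.nsmulSaturated_top {M : Type} [AddCommGroup M] :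
    (⊤ : AddSubgroup M).NSMulSaturated :=
  fun _ _ _ => Or.inr trivial

theorem AddSubgroup.nsmulSaturated_iInf {M ι : Type} [AddCommGroup M] {H : ι → AddSubgroup M}
    (hH : ∀ i, (H i).NSMulSaturated) : (⨅ i, H i).NSMulSaturated := by
  intro c g hg
  by_cases hc : c = 0
  · exact Or.inl hc
  · refine Or.inr (AddSubgroup.mem_iInf.2 fun i => ?_)
    exact ((hH i) (AddSubgroup.mem_iInf.1 hg i)).resolve_left hc

theorem AddSubgroup.nsmulSaturated_inf {M : Type} [AddCommGroup M] {H K : AddSubgroup M}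
    (hH : H.NSMulSaturated) (hK : K.NSMulSaturated) : (H ⊓ K).NSMulSaturated := by
  intro c g hg
  by_cases hc : c = 0
  · exact Or.inl hc
  · exact Or.inr ⟨(hH hg.1).resolve_left hc, (hK hg.2).resolve_left hc⟩

theorem Submodule.exists_isCompl_of_isTorsionFree_quotient {R M : Type} [CommRing R]
    [IsDomain R] [IsPrincipalIdealRing R] [AddCommGroup M] [Module R M] [Module.Finite R M]
    (S : Submodule R M) [Module.IsTorsionFree R (M ⧸ S)] : ∃ K, IsCompl S K := by
  obtain ⟨sec, hsec⟩ := Module.projective_lifting_property S.mkQ LinearMap.id S.mkQ_surjective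
  have hproj : ∀ x, x - sec (S.mkQ x) ∈ S := fun x => by
    rw [← Submodule.Quotient.mk_eq_zero, ← Submodule.mkQ_apply, map_sub,
      ← LinearMap.comp_apply S.mkQ sec, hsec, LinearMap.id_apply, sub_self]
  let f : M →ₗ[R] S := (LinearMap.id - sec ∘ₗ S.mkQ).codRestrict S hproj
  refine ⟨LinearMap.ker f, LinearMap.isCompl_of_proj fun x => Subtype.ext ?_⟩
  simp [f, (Submodule.Quotient.mk_eq_zero S).2 x.2]

theorem AddSubgroup.exists_isCompl_of_nsmulSaturated {M : Type} [AddCommGroup M]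
    [Module.Finite ℤ M] {H : AddSubgroup M} (hH : H.NSMulSaturated) : ∃ K, IsCompl H K := by
  have : Module.IsTorsionFree ℤ (M ⧸ H.toIntSubmodule) := by
    refine .of_smul_eq_zero fun c x hx => ?_
    obtain ⟨g, rfl⟩ := Submodule.mkQ_surjective _ x
    rw [← map_smul, Submodule.mkQ_apply, Submodule.Quotient.mk_eq_zero] at hx
    rw [Submodule.mkQ_apply, Submodule.Quotient.mk_eq_zero]
    exact AddSubgroup.saturated_iff_zsmul.1 hH c g hx
  obtain ⟨K, hK⟩ := H.toIntSubmodule.exists_isCompl_of_isTorsionFree_quotient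
  exact ⟨AddSubgroup.toIntSubmodule.symm K, AddSubgroup.toIntSubmodule.symm.isCompl hK⟩

section Locus

variable {n : ℕ}

theorem subordinate_iInf {m : ℕ} {p : (Fin n → ℤ) →+ (Fin m → ℤ)} {J : Type}
    {H : J → AddSubgroup ((Fin n → ℤ) →+ ℤ)} :
    Subordinate p (⨅ j, H j) ↔ ∀ j, Subordinate p (H j) := by
  simp only [Subordinate, AddSubgroup.mem_iInf]
  exact forall_comm

theorem subordinate_inf {m : ℕ} {p : (Fin n → ℤ) →+ (Fin m → ℤ)}
    {H K : AddSubgroup ((Fin n → ℤ) →+ ℤ)} :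
    Subordinate p (H ⊓ K) ↔ Subordinate p H ∧ Subordinate p K := by
  simp only [Subordinate, AddSubgroup.mem_inf]
  exact forall_and

theorem subordinate_top {m : ℕ} (p : (Fin n → ℤ) →+ (Fin m → ℤ)) : Subordinate p ⊤ :=
  fun _ => trivial

def IsSubordinationLocus (P : ∀ m : ℕ, ((Fin n → ℤ) →+ (Fin m → ℤ)) → Prop) : Prop :=
  ∃ (I : Type) (_ : Finite I) (H : I → AddSubgroup ((Fin n → ℤ) →+ ℤ)),
    (∀ i, (H i).NSMulSaturated) ∧ ∀ m p, P m p ↔ ∃ i, Subordinate p (H i)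

namespace IsSubordinationLocus

variable {P Q : ∀ m : ℕ, ((Fin n → ℤ) →+ (Fin m → ℤ)) → Prop}

theorem congr (hP : IsSubordinationLocus P) (h : ∀ m p, P m p ↔ Q m p) :
    IsSubordinationLocus Q := by
  obtain ⟨I, hI, H, hsat, hP⟩ := hP
  exact ⟨I, hI, H, hsat, fun m p => (h m p).symm.trans (hP m p)⟩

theorem const (c : Prop) : IsSubordinationLocus (n := n) fun _ _ => c :=
  ⟨PLift c, inferInstance, fun _ => ⊤, fun _ => AddSubgroup.nsmulSaturated_top,
    fun _ p => ⟨fun hc => ⟨⟨hc⟩, subordinate_top p⟩, fun ⟨hc, _⟩ => hc.down⟩⟩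

theorem exists_finite {J : Type} [Finite J] {P : J → ∀ m : ℕ, ((Fin n → ℤ) →+ (Fin m → ℤ)) → Prop}
    (hP : ∀ j, IsSubordinationLocus (P j)) : IsSubordinationLocus fun m p => ∃ j, P j m p := by
  choose I hI H hsat hP using hP
  refine ⟨Σ j, I j, inferInstance, fun i => H i.1 i.2, fun i => hsat i.1 i.2, fun m p => ?_⟩
  simp only [hP, Sigma.exists]

theorem forall_finite {J : Type} [Finite J] {P : J → ∀ m : ℕ, ((Fin n → ℤ) →+ (Fin m → ℤ)) → Prop}
    (hP : ∀ j, IsSubordinationLocus (P j)) : IsSubordinationLocus fun m p => ∀ j, P j m p := by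
  choose I hI H hsat hP using hP
  refine ⟨∀ j, I j, inferInstance, fun i => ⨅ j, H j (i j),
    fun i => AddSubgroup.nsmulSaturated_iInf fun j => hsat j (i j), fun m p => ?_⟩
  simp only [hP, subordinate_iInf, Classical.skolem]

theorem and (hP : IsSubordinationLocus P) (hQ : IsSubordinationLocus Q) :
    IsSubordinationLocus fun m p => P m p ∧ Q m p := by
  obtain ⟨I, hI, H, hsat, hP⟩ := hP
  obtain ⟨I', hI', H', hsat', hQ⟩ := hQ
  refine ⟨I × I', inferInstance, fun i => H i.1 ⊓ H' i.2,
    fun i => AddSubgroup.nsmulSaturated_inf (hsat i.1) (hsat' i.2), fun m p => ?_⟩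
  simp only [hP, hQ, subordinate_inf, Prod.exists, exists_and_left, exists_and_right]

theorem exists_fin_isCompl_ne_top (hP : IsSubordinationLocus P)
    (hid : ¬ P n (AddMonoidHom.id _)) :
    ∃ (s : ℕ) (Gs : Fin s → AddSubgroup ((Fin n → ℤ) →+ ℤ)),
      (∀ i, (∃ K, IsCompl (Gs i) K) ∧ Gs i ≠ ⊤) ∧
      ∀ (m : ℕ) (p : (Fin n → ℤ) →+ (Fin m → ℤ)), P m p ↔ ∃ i, Subordinate p (Gs i) := by
  obtain ⟨I, hI, H, hsat, hP⟩ := hP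
  let e := Finite.equivFin I
  refine ⟨Nat.card I, fun i => H (e.symm i), fun i => ⟨?_, fun htop => hid ?_⟩, fun m p => ?_⟩
  · exact AddSubgroup.exists_isCompl_of_nsmulSaturated (hsat _)
  · exact (hP n _).2 ⟨e.symm i, by simp only at htop; rw [htop]; exact subordinate_top _⟩
  · rw [hP]
    exact e.exists_congr fun i => by simp

end IsSubordinationLocus

end Locus

theorem Finsupp.mapDomain_eq_zero_of_factorsThrough {ι β M : Type} [AddCommMonoid M]
    {g : ι →₀ M} {q : ι → β} {π : ι → ι} (hq : q.FactorsThrough π) (hπ : g.mapDomain π = 0) :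
    g.mapDomain q = 0 := by
  rw [← hq.extend_comp q, Finsupp.mapDomain_comp, hπ, Finsupp.mapDomain_zero]

theorem Finsupp.mapDomain_eq_zero_iff_exists_factorsThrough {ι β M : Type} [AddCommMonoid M]
    (g : ι →₀ M) (q : ι → β) :
    g.mapDomain q = 0 ↔ ∃ π : ι → ι, g.mapDomain π = 0 ∧ q.FactorsThrough π := by
  refine ⟨fun hq => ?_, fun ⟨π, hπ, hqπ⟩ => mapDomain_eq_zero_of_factorsThrough hqπ hπ⟩
  cases isEmpty_or_nonempty ι
  · exact ⟨id, Subsingleton.elim _ _, Function.injective_id.factorsThrough q⟩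
  · refine ⟨Function.invFun q ∘ q, by rw [Finsupp.mapDomain_comp, hq, Finsupp.mapDomain_zero],
      fun a b hab => ?_⟩
    rw [← Function.invFun_eq (⟨a, rfl⟩ : ∃ x, q x = q a),
      ← Function.invFun_eq (⟨b, rfl⟩ : ∃ x, q x = q b)]
    exact congrArg q hab

theorem Finsupp.mapDomain_subtypeDomain_mem_support {α M : Type} [AddCommMonoid M]
    (f : α →₀ M) : (f.subtypeDomain (· ∈ f.support)).mapDomain Subtype.val = f := by
  ext a
  by_cases ha : a ∈ f.support
  · exact Finsupp.mapDomain_apply Subtype.val_injective _ ⟨a, ha⟩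
  · rw [Finsupp.mapDomain_of_notMem_range _ _ (by simpa using ha), Finsupp.notMem_support_iff.1 ha]

def factorsThroughSubgroup {ι κ V : Type} [AddCommGroup V] (v : ι → V) (π : ι → κ) :
    AddSubgroup (V →+ ℤ) where
  carrier := {α | (α ∘ v).FactorsThrough π}
  zero_mem' _ _ _ := rfl
  add_mem' hα hβ _ _ hab := congrArg₂ (· + ·) (hα hab) (hβ hab)
  neg_mem' hα _ _ hab := congrArg Neg.neg (hα hab)

theorem factorsThroughSubgroup_nsmulSaturated {ι κ V : Type} [AddCommGroup V] (v : ι → V)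
    (π : ι → κ) : (factorsThroughSubgroup v π).NSMulSaturated := by
  intro c α hα
  by_cases hc : c = 0
  · exact Or.inl hc
  · refine Or.inr fun a b hab => ?_
    have : c • α (v a) = c • α (v b) := hα hab
    exact nsmul_right_injective hc this

theorem subordinate_factorsThroughSubgroup_iff {ι κ : Type} {n m : ℕ} (v : ι → Fin n → ℤ)
    (π : ι → κ) (p : (Fin n → ℤ) →+ (Fin m → ℤ)) :
    Subordinate p (factorsThroughSubgroup v π) ↔ (p ∘ v).FactorsThrough π :=
  ⟨fun h _ _ hab => funext fun j => h j hab, fun h j _ _ hab => congrFun (h hab) j⟩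

theorem isSubordinationLocus_mapDomain_comp_eq_zero {ι M : Type} [Finite ι] [AddCommMonoid M]
    {n : ℕ} (g : ι →₀ M) (v : ι → Fin n → ℤ) :
    IsSubordinationLocus fun _ p => g.mapDomain (p ∘ v) = 0 := by
  refine ⟨{π : ι → ι // g.mapDomain π = 0}, inferInstance, fun π => factorsThroughSubgroup v π.1,
    fun π => factorsThroughSubgroup_nsmulSaturated v π.1, fun m p => ?_⟩
  dsimp only
  rw [Finsupp.mapDomain_eq_zero_iff_exists_factorsThrough]
  simp only [subordinate_factorsThroughSubgroup_iff, Subtype.exists, exists_prop]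

theorem isSubordinationLocus_mapDomainRingHom_eq_zero {R : Type} [CommRing R] {n : ℕ}
    (f : AddMonoidAlgebra R (Fin n → ℤ)) :
    IsSubordinationLocus fun _ p => AddMonoidAlgebra.mapDomainRingHom R p f = 0 := by
  refine (isSubordinationLocus_mapDomain_comp_eq_zero
    (f.coeff.subtypeDomain (· ∈ f.coeff.support)) Subtype.val).congr fun m p => ?_
  rw [Finsupp.mapDomain_comp, Finsupp.mapDomain_subtypeDomain_mem_support]
  exact AddMonoidAlgebra.ofCoeff_eq_zero.symm

theorem isSubordinationLocus_rank_map_mapDomainRingHom_le {R ι κ : Type} [CommRing R]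
    [IsDomain R] [Fintype ι] [Fintype κ] {n : ℕ}
    (M : Matrix ι κ (AddMonoidAlgebra R (Fin n → ℤ))) (t : ℕ) :
    IsSubordinationLocus fun m p =>
      ((M.map (AddMonoidAlgebra.mapDomainRingHom R p)).map
        (algebraMap _ (FractionRing (AddMonoidAlgebra R (Fin m → ℤ))))).rank ≤ t := by
  refine (IsSubordinationLocus.forall_finite fun rc : (Fin (t + 1) → ι) × (Fin (t + 1) → κ) =>
    isSubordinationLocus_mapDomainRingHom_eq_zero (M.submatrix rc.1 rc.2).det).congr
    fun m p => ?_
  rw [Matrix.map_map, ← RingHom.coe_comp, Matrix.rank_map_le_iff, Prod.forall]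
  simp only [RingHom.comp_apply, map_eq_zero_iff _ (IsFractionRing.injective _ _)]

theorem blockFlatten_mul {a b c l : ℕ} {S : Type} [Semiring S]
    (X : Matrix (Fin a) (Fin b) (Matrix (Fin l) (Fin l) S))
    (Y : Matrix (Fin b) (Fin c) (Matrix (Fin l) (Fin l) S)) :
    blockFlatten (X * Y) = blockFlatten X * blockFlatten Y := by
  ext
  simp only [blockFlatten, Matrix.of_apply, Matrix.mul_apply, Matrix.sum_apply,
    Fintype.sum_prod_type]

section ChainComplex

variable {G : Type} [Group G] {l : ℕ} {S S' : Type} [CommRing S] [CommRing S']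
  (C : FinFreeChainComplex (MonoidAlgebra ℤ G))

@[simp]
theorem glMap_id : glMap (l := l) (RingHom.id S) = MonoidHom.id _ := by
  ext; simp [glMap]

theorem reprMatRingHom_glMap (τ : G →* GL (Fin l) S) (h : S →+* S') :
    reprMatRingHom ((glMap h).comp τ) = h.mapMatrix.comp (reprMatRingHom τ) := by
  apply MonoidAlgebra.ringHom_ext <;> intro <;> simp [reprMatRingHom, glMap]

noncomputable def bdryMatrix (τ : G →* GL (Fin l) S) (k : ℕ) :
    Matrix (Fin (C.c k) × Fin l) (Fin (C.c (k + 1)) × Fin l) S :=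
  blockFlatten ((C.d k).map (reprMatRingHom τ))

theorem bdryMatrix_glMap (τ : G →* GL (Fin l) S) (h : S →+* S') (k : ℕ) :
    bdryMatrix C ((glMap h).comp τ) k = (bdryMatrix C τ k).map h := by
  ext
  simp [bdryMatrix, blockFlatten, reprMatRingHom_glMap]

theorem bdryMatrix_mul_bdryMatrix (τ : G →* GL (Fin l) S) (k : ℕ) :
    bdryMatrix C τ k * bdryMatrix C τ (k + 1) = 0 := by
  rw [bdryMatrix, bdryMatrix, ← blockFlatten_mul, ← Matrix.map_mul, C.dsq,
    Matrix.map_zero _ (map_zero _)]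
  rfl

theorem reprBdryRank_eq_rank_bdryMatrix (τ : G →* GL (Fin l) S) (k : ℕ) :
    reprBdryRank C τ k = ((bdryMatrix C τ k).map (algebraMap S (FractionRing S))).rank :=
  rfl

theorem reprBdryRank_glMap_le [IsDomain S] [IsDomain S'] (τ : G →* GL (Fin l) S) (h : S →+* S')
    (k : ℕ) : reprBdryRank C ((glMap h).comp τ) k ≤ reprBdryRank C τ k := by
  rw [reprBdryRank_eq_rank_bdryMatrix, reprBdryRank_eq_rank_bdryMatrix, bdryMatrix_glMap,
    Matrix.map_map, ← RingHom.coe_comp]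
  exact Matrix.rank_map_le_rank_map_of_injective _ (IsFractionRing.injective _ _) _

theorem reprBdryRankAt_glMap_le [IsDomain S] [IsDomain S'] (τ : G →* GL (Fin l) S)
    (h : S →+* S') (k : ℕ) : reprBdryRankAt C ((glMap h).comp τ) k ≤ reprBdryRankAt C τ k := by
  cases k with
  | zero => exact le_rfl
  | succ k => exact reprBdryRank_glMap_le C τ h k

theorem reprBdryRankAt_add_reprBdryRank_le [IsDomain S] (τ : G →* GL (Fin l) S) (k : ℕ) :
    reprBdryRankAt C τ k + reprBdryRank C τ k ≤ C.c k * l := by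
  cases k with
  | zero =>
    simpa [reprBdryRankAt, reprBdryRank_eq_rank_bdryMatrix] using
      Matrix.rank_le_card_height ((bdryMatrix C τ 0).map (algebraMap S (FractionRing S)))
  | succ k =>
    have hmul : (bdryMatrix C τ k).map (algebraMap S (FractionRing S)) *
        (bdryMatrix C τ (k + 1)).map (algebraMap S (FractionRing S)) = 0 := by
      rw [← Matrix.map_mul, bdryMatrix_mul_bdryMatrix, Matrix.map_zero _ (map_zero _)]
    simpa [reprBdryRankAt, reprBdryRank_eq_rank_bdryMatrix] using
      Matrix.rank_add_rank_le_card_of_mul_eq_zero hmul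

variable {R : Type} [CommRing R] [IsDomain R] {n : ℕ}
  (ρ : G →* GL (Fin l) (AddMonoidAlgebra R (Fin n → ℤ)))

theorem isSubordinationLocus_reprBdryRank_add_le (k j r : ℕ) :
    IsSubordinationLocus fun _ p =>
      reprBdryRank C ((glMap (AddMonoidAlgebra.mapDomainRingHom R p)).comp ρ) k + j ≤ r := by
  refine ((isSubordinationLocus_rank_map_mapDomainRingHom_le (bdryMatrix C ρ k) (r - j)).and
    (.const (j ≤ r))).congr fun m p => ?_
  rw [reprBdryRank_eq_rank_bdryMatrix, bdryMatrix_glMap]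
  omega

theorem isSubordinationLocus_reprBdryRankAt_add_le (k j r : ℕ) :
    IsSubordinationLocus fun _ p =>
      reprBdryRankAt C ((glMap (AddMonoidAlgebra.mapDomainRingHom R p)).comp ρ) k + j ≤ r := by
  cases k with
  | zero => exact .const (0 + j ≤ r)
  | succ k => exact isSubordinationLocus_reprBdryRank_add_le C ρ k j r

end ChainComplex

theorem Nat.sub_sub_add_le_sub_sub_iff {c r₀ r₁ s₀ s₁ q : ℕ} (h₀ : s₀ ≤ r₀) (h₁ : s₁ ≤ r₁)
    (hr : r₀ + r₁ ≤ c) :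
    c - r₀ - r₁ + q ≤ c - s₀ - s₁ ↔ ∃ j : Fin (q + 1), s₀ + j ≤ r₀ ∧ s₁ + (q - j) ≤ r₁ := by
  refine ⟨fun h => ⟨⟨min q (r₀ - s₀), by omega⟩, by simp only; omega, by simp only; omega⟩,
    fun ⟨j, hj₀, hj₁⟩ => by have := j.isLt; omega⟩

theorem exists_jump_subgroups_twisted_general
    {G : Type} [Group G] {R : Type} [CommRing R] [IsDomain R] {n l : ℕ}
    (ρO : G →* GL (Fin l) (AddMonoidAlgebra R (Fin n → ℤ)))
    (C : FinFreeChainComplex (MonoidAlgebra ℤ G)) (k : ℕ) (q : ℕ) (hq : 0 < q) :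
    ∃ (s : ℕ) (Gs : Fin s → AddSubgroup ((Fin n → ℤ) →+ ℤ)),
      (∀ i, (∃ K, IsCompl (Gs i) K) ∧ Gs i ≠ ⊤) ∧
      ∀ (m : ℕ) (p : (Fin n → ℤ) →+ (Fin m → ℤ)),
        reprBetti C ρO k + q ≤
          reprBetti C ((glMap (AddMonoidAlgebra.mapDomainRingHom R p)).comp ρO) k ↔
        ∃ i, Subordinate p (Gs i) := by
  refine IsSubordinationLocus.exists_fin_isCompl_ne_top ?_ (by
    simp only [AddMonoidAlgebra.mapDomainRingHom_id, glMap_id, MonoidHom.CompTriple.comp_eq]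
    omega)
  refine (IsSubordinationLocus.exists_finite fun j : Fin (q + 1) =>
    (isSubordinationLocus_reprBdryRankAt_add_le C ρO k j (reprBdryRankAt C ρO k)).and
    (isSubordinationLocus_reprBdryRank_add_le C ρO k (q - j) (reprBdryRank C ρO k))).congr
    fun m p => (Nat.sub_sub_add_le_sub_sub_iff (reprBdryRankAt_glMap_le C ρO _ k)
      (reprBdryRank_glMap_le C ρO _ k) (reprBdryRankAt_add_reprBdryRank_le C ρO k)).symm

/-- for a representation `ρ : G → GL(l, R)` over an integral domain `R`, a
surjection `φ : G → ℤⁿ`, the twisted representation `ρ°(g) = φ(g)·ρ(g)`, a bounded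
complex `C_*` of f.g. free right `ℤ[G]`-modules, and `k ≥ 0`, `q > 0`, there is a finite
family of proper full subgroups `G_1, …, G_s` of `Hom(ℤⁿ, ℤ)` such that for every `m`
and `p : ℤⁿ → ℤᵐ`, one has `b_k(C_*, ρ; p) ≥ b_k°(C_*, ρ) + q` iff `p` is subordinate
to some `G_i`. -/
theorem exists_jump_subgroups_twisted
    {G : Type} [Group G] {R : Type} [CommRing R] [IsDomain R] {n l : ℕ}
    (ρ : G →* GL (Fin l) R)
    (φ : G →* Multiplicative (Fin n → ℤ)) (hφ : Function.Surjective φ)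
    (ρO : G →* GL (Fin l) (AddMonoidAlgebra R (Fin n → ℤ)))
    (hρO : ∀ g : G, (ρO g : Matrix (Fin l) (Fin l) (AddMonoidAlgebra R (Fin n → ℤ))) =
      AddMonoidAlgebra.single (Multiplicative.toAdd (φ g)) (1 : R) •
        ((ρ g : Matrix (Fin l) (Fin l) R).map
          ⇑(algebraMap R (AddMonoidAlgebra R (Fin n → ℤ)))))
    (C : FinFreeChainComplex (MonoidAlgebra ℤ G)) (k : ℕ) (q : ℕ) (hq : 0 < q) :
    ∃ (s : ℕ) (Gs : Fin s → AddSubgroup ((Fin n → ℤ) →+ ℤ)),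
      (∀ i, (∃ K, IsCompl (Gs i) K) ∧ Gs i ≠ ⊤) ∧
      ∀ (m : ℕ) (p : (Fin n → ℤ) →+ (Fin m → ℤ)),
        reprBetti C ρO k + q ≤
          reprBetti C ((glMap (AddMonoidAlgebra.mapDomainRingHom R p)).comp ρO) k ↔
        ∃ i, Subordinate p (Gs i) :=
  exists_jump_subgroups_twisted_general ρO C k q hq
end
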